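/- For every integer k ≥ 5 and every integer m ≥ 1 there exists a graph T ∈ 𝒯_k containing a copy of K_{k−1} such that q(T) = 2, |T| = m·((k−1) + (k−2)(k−3)), and 2||T|| = m·((k−1)(k−2) + (k−3)(k−2)(k−3) + 2(k−3)) + 2(m−1). -/

import Mathlib

open scoped Classical

namespace ATPaper

variable {V : Type*}

/-- Out-degree of `v` in the digraph given by the arc set `A`. -/
noncomputable def outDeg (A : Finset (V × V)) (v : V) : ℕ :=
  (A.filter fun e => e.1 = v).card

/-- In-degree of `v` in the digraph given by the arc set `A`. -/
noncomputable def inDeg (A : Finset (V × V)) (v : V) : ℕ :=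
  (A.filter fun e => e.2 = v).card

/-- `A` is an orientation of the simple graph `G`: every edge of `G` gets exactly one
direction, and every arc of `A` comes from an edge of `G`. -/
def IsOrientation (G : SimpleGraph V) (A : Finset (V × V)) : Prop :=
  (∀ u v : V, G.Adj u v ↔ ((u, v) ∈ A ∨ (v, u) ∈ A)) ∧
    ∀ u v : V, (u, v) ∈ A → (v, u) ∉ A

/-- Number of spanning eulerian subdigraphs of `A` with an even number of arcs. -/
noncomputable def EE (A : Finset (V × V)) : ℕ :=
  (A.powerset.filter fun B => (∀ v, outDeg B v = inDeg B v) ∧ Even B.card).card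

/-- Number of spanning eulerian subdigraphs of `A` with an odd number of arcs. -/
noncomputable def EO (A : Finset (V × V)) : ℕ :=
  (A.powerset.filter fun B => (∀ v, outDeg B v = inDeg B v) ∧ ¬ Even B.card).card

/-- `G` is `f`-Alon–Tarsi. -/
def IsfAT (G : SimpleGraph V) (f : V → ℕ) : Prop :=
  ∃ A : Finset (V × V), IsOrientation G A ∧ EE A ≠ EO A ∧ ∀ v, outDeg A v + 1 ≤ f v

/-- The Alon–Tarsi number of `G`. -/
noncomputable def AT (G : SimpleGraph V) : ℕ := sInf {k : ℕ | IsfAT G fun _ => k}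

/-- `G` is `k`-AT-critical. -/
def ATCritical (G : SimpleGraph V) (k : ℕ) : Prop :=
  AT G = k ∧ ∀ H : SimpleGraph V, H < G → AT H < k

/-- The average degree `2‖G‖/|G|` of `G`. -/
noncomputable def avgDeg (G : SimpleGraph V) : ℝ :=
  2 * (Nat.card G.edgeSet : ℝ) / (Nat.card V : ℝ)

/-- `G` is (isomorphic to) the complete graph `K_k`. -/
def IsCompleteK (G : SimpleGraph V) (k : ℕ) : Prop :=
  Nonempty (G ≃g (⊤ : SimpleGraph (Fin k)))

/-- The induced subgraph of `G` on `B` has no cut vertex. -/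
def NoCutVtx (G : SimpleGraph V) (B : Set V) : Prop :=
  ∀ v ∈ B, (G.induce (B \ {v})).Preconnected

/-- `B` is (the vertex set of) a block of `G`: a maximal connected subgraph without
a cut vertex. -/
def IsBlockSet (G : SimpleGraph V) (B : Set V) : Prop :=
  (G.induce B).Connected ∧ NoCutVtx G B ∧
    ∀ C : Set V, B ⊆ C → (G.induce C).Connected → NoCutVtx G C → C = B

/-- The induced subgraph of `G` on `B` is an odd cycle (connected, 2-regular,
odd order at least 3). -/
def IsOddCycleSet (G : SimpleGraph V) (B : Set V) : Prop :=
  (G.induce B).Connected ∧ Odd (Nat.card B) ∧ 3 ≤ Nat.card B ∧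
    ∀ v ∈ B, Nat.card {u : V | u ∈ B ∧ G.Adj v u} = 2

/-- `G` is a Gallai tree: connected, and every block is a complete graph or an odd cycle. -/
def IsGallaiTree (G : SimpleGraph V) : Prop :=
  G.Connected ∧ ∀ B : Set V, IsBlockSet G B → G.IsClique B ∨ IsOddCycleSet G B

/-- `G ∈ 𝒯_k`: `G` is a Gallai tree with maximum degree at most `k-1`, and `G ≠ K_k`. -/
def MemTk (G : SimpleGraph V) (k : ℕ) : Prop :=
  IsGallaiTree G ∧ (∀ v : V, Nat.card (G.neighborSet v) ≤ k - 1) ∧ ¬ IsCompleteK G k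

/-- `G` contains a copy of `K_n`. -/
def HasClique (G : SimpleGraph V) (n : ℕ) : Prop := ∃ S : Finset V, G.IsNClique n S

/-- `W^k(G)`: the set of vertices of `G` contained in some copy of `K_{k-1}`. -/
def Wk (G : SimpleGraph V) (k : ℕ) : Set V :=
  {v | ∃ S : Finset V, G.IsNClique (k - 1) S ∧ v ∈ S}

/-- `q(G)`: the number of non-cut vertices of `G` lying in some copy of `K_{k-1}`. -/
noncomputable def qT (G : SimpleGraph V) (k : ℕ) : ℕ :=
  Nat.card {v : V | v ∈ Wk G k ∧ (G.induce {v}ᶜ).Preconnected}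

/-- The vertices of `S` lying in `W^k` of the induced subgraph of `G` on `S`. -/
def WkIn (G : SimpleGraph V) (k : ℕ) (S : Set V) : Set V :=
  {v | ∃ hv : v ∈ S, (⟨v, hv⟩ : S) ∈ Wk (G.induce S) k}

/-- `S` is (the vertex set of) a connected component of the induced subgraph of `G` on `X`. -/
def IsComponentOf (G : SimpleGraph V) (X S : Set V) : Prop :=
  S ⊆ X ∧ (G.induce S).Connected ∧ ∀ u ∈ S, ∀ v ∈ X, G.Adj u v → v ∈ S

/-- `G` is `f`-choosable. -/
def Choosable (G : SimpleGraph V) (f : V → ℕ) : Prop :=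
  ∀ L : V → Finset ℕ, (∀ v, (L v).card = f v) →
    ∃ φ : V → ℕ, (∀ v, φ v ∈ L v) ∧ ∀ ⦃u v : V⦄, G.Adj u v → φ u ≠ φ v

/-- `G` is `k`-list-critical: `G` is not `(k-1)`-choosable, but every proper subgraph is. -/
def ListCritical (G : SimpleGraph V) (k : ℕ) : Prop :=
  ¬ Choosable G (fun _ => k - 1) ∧ ∀ H : SimpleGraph V, H < G → Choosable H (fun _ => k - 1)

end ATPaper

/-!
Each of the `m` units is a hub `K_{k-1}` carrying `k - 3` leaf cliques `K_{k-2}`, each joined by a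
bridge to its own hub vertex (its anchor); consecutive hubs are joined by a bridge from the exit
port of one to the entry port of the next. Every edge between different cliques is a bridge, so
any two non-adjacent vertices are separated by an endpoint of a bridge, and every block is a
clique. A clique meeting a leaf clique lies inside it or inside the bridge at it, so the copies
of `K_{k-1}` are exactly the hubs. Anchors and linked ports are cut vertices, which leaves the
entry port of the first unit and the exit port of the last as the only non-cut vertices in a
`K_{k-1}`. The degree sum is the sum over the cliques plus twice the number
`m (k - 3) + (m - 1)` of bridges.
-/

namespace SimpleGraph

variable {V : Type*} (G : SimpleGraph V)

def SeparatedBy (S : Set V) (v : V) : Prop :=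
  ∀ ⦃p q⦄, G.Adj p q → p ∈ S → q ∉ S → p = v ∨ q = v

def Separated (u w : V) : Prop :=
  ∃ (S : Set V) (v : V), v ≠ u ∧ v ≠ w ∧ G.SeparatedBy S v ∧ u ∈ S ∧ w ∉ S

def IsOnlyEdgeLeaving (S : Set V) (a b : V) : Prop :=
  a ∈ S ∧ b ∉ S ∧ G.Adj a b ∧ ∀ ⦃p q⦄, G.Adj p q → p ∈ S → q ∉ S → p = a ∧ q = b

variable {G} {S : Set V} {a b u v w : V}

lemma SeparatedBy.mem_iff_of_adj (h : G.SeparatedBy S v) {p q : V} (hpq : G.Adj p q)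
    (hp : p ≠ v) (hq : q ≠ v) : p ∈ S ↔ q ∈ S := by
  constructor
  · intro hpS; by_contra hqS; exact (h hpq hpS hqS).elim hp hq
  · intro hqS; by_contra hpS; exact (h hpq.symm hqS hpS).elim hq hp

lemma SeparatedBy.mem_iff_of_reachable (h : G.SeparatedBy S v) {X : Set V} (hv : v ∉ X)
    {x y : X} (hxy : (G.induce X).Reachable x y) : (x : V) ∈ S ↔ (y : V) ∈ S := by
  obtain ⟨walk⟩ := hxy
  induction walk with
  | nil => rfl
  | cons hadj _ ih =>
    exact (h.mem_iff_of_adj hadj (ne_of_mem_of_not_mem (Subtype.prop _) hv)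
      (ne_of_mem_of_not_mem (Subtype.prop _) hv)).trans ih

lemma SeparatedBy.not_preconnected (h : G.SeparatedBy S v) (hu : u ≠ v) (hw : w ≠ v)
    (huS : u ∈ S) (hwS : w ∉ S) : ¬ (G.induce {v}ᶜ).Preconnected := fun hpre =>
  hwS ((h.mem_iff_of_reachable (X := {v}ᶜ) (by simp) (hpre ⟨u, hu⟩ ⟨w, hw⟩)).mp huS)

lemma SeparatedBy.compl (h : G.SeparatedBy S v) : G.SeparatedBy Sᶜ v :=
  fun _ _ hpq hp hq => (h hpq.symm (not_not.1 hq) hp).symm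

lemma Separated.symm (h : G.Separated u w) : G.Separated w u :=
  let ⟨S, v, hvu, hvw, hS, huS, hwS⟩ := h
  ⟨Sᶜ, v, hvw, hvu, hS.compl, hwS, not_not.2 huS⟩

theorem isClique_of_separated (hsep : ∀ u w, u ≠ w → ¬ G.Adj u w → G.Separated u w)
    {B : Set V} (hB : (G.induce B).Connected) (hNC : ATPaper.NoCutVtx G B) : G.IsClique B := by
  intro u hu w hw huw
  by_contra hadj
  obtain ⟨S, v, hvu, hvw, hS, huS, hwS⟩ := hsep u w huw hadj
  have hpre : (G.induce (B \ {v})).Preconnected := by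
    by_cases hvB : v ∈ B
    · exact hNC v hvB
    · rw [Set.sdiff_singleton_eq_self hvB]; exact hB.preconnected
  exact hwS ((hS.mem_iff_of_reachable (X := B \ {v}) (by simp)
    (hpre ⟨u, hu, hvu.symm⟩ ⟨w, hw, hvw.symm⟩)).mp huS)

theorem isGallaiTree_of_separated (hG : G.Connected)
    (hsep : ∀ u w, u ≠ w → ¬ G.Adj u w → G.Separated u w) : ATPaper.IsGallaiTree G :=
  ⟨hG, fun _ hB => Or.inl (isClique_of_separated hsep hB.1 hB.2.1)⟩

lemma IsOnlyEdgeLeaving.separatedBy_left (h : G.IsOnlyEdgeLeaving S a b) : G.SeparatedBy S a :=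
  fun _ _ hpq hp hq => Or.inl (h.2.2.2 hpq hp hq).1

lemma IsOnlyEdgeLeaving.separatedBy_right (h : G.IsOnlyEdgeLeaving S a b) : G.SeparatedBy S b :=
  fun _ _ hpq hp hq => Or.inr (h.2.2.2 hpq hp hq).2

lemma IsOnlyEdgeLeaving.separated (h : G.IsOnlyEdgeLeaving S a b) (hu : u ∈ S) (hw : w ∉ S)
    (huw : ¬ G.Adj u w) : G.Separated u w := by
  by_cases hua : u = a
  · subst hua
    exact ⟨S, b, fun hbu => h.2.1 (hbu ▸ hu), fun hbw => huw (hbw ▸ h.2.2.1),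
      h.separatedBy_right, hu, hw⟩
  · exact ⟨S, a, Ne.symm hua, fun haw => hw (haw ▸ h.1), h.separatedBy_left, hu, hw⟩

lemma IsOnlyEdgeLeaving.subset_pair_of_isClique (h : G.IsOnlyEdgeLeaving S a b) {K : Set V}
    (hK : G.IsClique K) {p q : V} (hp : p ∈ K) (hpS : p ∈ S) (hq : q ∈ K) (hqS : q ∉ S) :
    K ⊆ {a, b} := by
  intro r hr
  by_cases hrS : r ∈ S
  · exact Or.inl (h.2.2.2 (hK hr hq fun hrq => hqS (hrq ▸ hrS)) hrS hqS).1
  · exact Or.inr (h.2.2.2 (hK hp hr fun hpr => hrS (hpr ▸ hpS)) hpS hrS).2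

section CliqueBridge

open Finset

variable {ι Z : Type*}

def cliqueBridge (blk : V → ι) (src tgt : Z → V) : SimpleGraph V :=
  fromRel fun p q => blk p = blk q ∨ ∃ z, src z = p ∧ tgt z = q

variable {blk : V → ι} {src tgt : Z → V} {p q : V}

lemma cliqueBridge_adj_of_blk_eq (hpq : p ≠ q) (h : blk p = blk q) :
    (cliqueBridge blk src tgt).Adj p q :=
  (fromRel_adj _ _ _).2 ⟨hpq, Or.inl (Or.inl h)⟩

lemma cliqueBridge_adj_src_tgt (hblk : ∀ z, blk (src z) ≠ blk (tgt z)) (z : Z) :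
    (cliqueBridge blk src tgt).Adj (src z) (tgt z) :=
  (fromRel_adj _ _ _).2 ⟨fun h => hblk z (congrArg blk h), Or.inl (Or.inr ⟨z, rfl, rfl⟩)⟩

lemma cliqueBridge_adj_iff (hblk : ∀ z, blk (src z) ≠ blk (tgt z)) :
    (cliqueBridge blk src tgt).Adj p q ↔
      (p ≠ q ∧ blk p = blk q) ∨ ∃ w, Sum.elim src tgt w = p ∧ Sum.elim tgt src w = q := by
  simp only [cliqueBridge, fromRel_adj, Sum.exists, Sum.elim_inl, Sum.elim_inr]
  constructor
  · rintro ⟨hpq, (h | h) | (h | h)⟩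
    · exact Or.inl ⟨hpq, h⟩
    · exact Or.inr (Or.inl h)
    · exact Or.inl ⟨hpq, h.symm⟩
    · exact Or.inr (Or.inr (h.imp fun _ => And.symm))
  · rintro (⟨hpq, h⟩ | ⟨z, rfl, rfl⟩ | ⟨z, rfl, rfl⟩)
    · exact ⟨hpq, Or.inl (Or.inl h)⟩
    · exact ⟨fun h => hblk z (congrArg blk h), Or.inl (Or.inr ⟨z, rfl, rfl⟩)⟩
    · exact ⟨fun h => hblk z (congrArg blk h).symm, Or.inr (Or.inr ⟨z, rfl, rfl⟩)⟩

lemma cliqueBridge_isOnlyEdgeLeaving (hblk : ∀ z, blk (src z) ≠ blk (tgt z)) {S : Set V}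
    (hS : ∀ p q, blk p = blk q → p ∈ S → q ∈ S) {a b : V}
    (hab : (cliqueBridge blk src tgt).Adj a b) (ha : a ∈ S) (hb : b ∉ S)
    (hz : ∀ z, (src z ∈ S ↔ tgt z ∈ S) ∨ s(src z, tgt z) = s(a, b)) :
    (cliqueBridge blk src tgt).IsOnlyEdgeLeaving S a b := by
  refine ⟨ha, hb, hab, fun p q hpq hp hq => ?_⟩
  rcases (cliqueBridge_adj_iff hblk).1 hpq with ⟨-, h⟩ | ⟨w, rfl, rfl⟩
  · exact absurd (hS p q h hp) hq
  · have hcross : s(Sum.elim src tgt w, Sum.elim tgt src w) = s(a, b) := by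
      rcases w with z | z
      · exact (hz z).resolve_left fun h => hq (h.1 hp)
      · exact Sym2.eq_swap.trans ((hz z).resolve_left fun h => hq (h.2 hp))
    rcases Sym2.eq_iff.1 hcross with h | ⟨rfl, -⟩
    · exact h
    · exact absurd hp hb

variable [Fintype V] [Fintype Z] [DecidableEq ι]

lemma cliqueBridge_degree (hblk : ∀ z, blk (src z) ≠ blk (tgt z))
    (hends : Function.Injective (Sum.elim src tgt)) (p : V) :
    (cliqueBridge blk src tgt).degree p =
      #({q | blk q = blk p} : Finset V) - 1 + #{w | Sum.elim src tgt w = p} := by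
  have hpartner : ∀ w, blk (Sum.elim src tgt w) ≠ blk (Sum.elim tgt src w) := by
    rintro (z | z)
    exacts [hblk z, (hblk z).symm]
  have hnbr : (cliqueBridge blk src tgt).neighborFinset p =
      ({q | blk q = blk p} : Finset V).erase p ∪
        ({w | Sum.elim src tgt w = p} : Finset (Z ⊕ Z)).image (Sum.elim tgt src) := by
    ext q
    simp only [mem_neighborFinset, cliqueBridge_adj_iff hblk, mem_union, mem_erase,
      mem_filter, mem_univ, true_and, mem_image]
    grind
  rw [← card_neighborFinset_eq_degree, hnbr, card_union_of_disjoint, card_erase_of_mem,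
    card_image_of_injOn]
  · intro w hw w' hw' _
    simp only [coe_filter, mem_univ, true_and, Set.mem_ofPred_eq] at hw hw'
    exact hends (hw.trans hw'.symm)
  · simp
  · rw [Finset.disjoint_left]
    simp only [mem_erase, mem_filter, mem_univ, true_and, mem_image, not_exists, not_and]
    rintro q ⟨-, hq⟩ w rfl rfl
    exact hpartner w hq.symm

lemma cliqueBridge_degree_le (hblk : ∀ z, blk (src z) ≠ blk (tgt z))
    (hends : Function.Injective (Sum.elim src tgt)) (p : V) :
    (cliqueBridge blk src tgt).degree p ≤ #({q | blk q = blk p} : Finset V) := by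
  have hfiber : 0 < #({q | blk q = blk p} : Finset V) := card_pos.2 ⟨p, by simp⟩
  have hbridges : #({w | Sum.elim src tgt w = p} : Finset (Z ⊕ Z)) ≤ 1 :=
    card_le_one.2 fun w hw w' hw' => hends ((mem_filter.1 hw).2.trans (mem_filter.1 hw').2.symm)
  rw [cliqueBridge_degree hblk hends]
  omega

lemma cliqueBridge_two_mul_card_edgeFinset (hblk : ∀ z, blk (src z) ≠ blk (tgt z))
    (hends : Function.Injective (Sum.elim src tgt)) :
    2 * #(cliqueBridge blk src tgt).edgeFinset =
      ∑ p, (#({q | blk q = blk p} : Finset V) - 1) + 2 * Fintype.card Z := by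
  rw [← sum_degrees_eq_twice_card_edges]
  simp only [cliqueBridge_degree hblk hends, sum_add_distrib]
  have hends_fiberwise := card_eq_sum_card_fiberwise (s := univ) (t := univ)
    (f := Sum.elim src tgt) fun _ _ => mem_univ _
  rw [card_univ, Fintype.card_sum] at hends_fiberwise
  rw [two_mul, hends_fiberwise]

end CliqueBridge

end SimpleGraph

namespace GallaiChain

open SimpleGraph Finset

/-- Unit `i` consists of the hub `(i, inl h)`, whose vertices are the entry port `inl 0`, the
exit port `inl 1` and the anchors `inr j`, and of the leaf cliques `(i, inr (j, _))`. -/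
abbrev Vtx (n c : ℕ) := Fin (n + 1) × ((Fin 2 ⊕ Fin c) ⊕ Fin c × Fin (c + 1))

abbrev Bridge (n c : ℕ) := (Fin (n + 1) × Fin c) ⊕ Fin n

variable {n c : ℕ}

def blk : Vtx n c → Fin (n + 1) × Option (Fin c)
  | (i, .inl _) => (i, none)
  | (i, .inr (j, _)) => (i, some j)

@[simp] lemma blk_inl (i : Fin (n + 1)) (h : Fin 2 ⊕ Fin c) : blk (i, .inl h) = (i, none) := rfl

@[simp] lemma blk_inr (i : Fin (n + 1)) (j : Fin c) (y : Fin (c + 1)) :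
    blk (i, .inr (j, y)) = (i, some j) := rfl

lemma fst_blk (p : Vtx n c) : (blk p).1 = p.1 := by
  rcases p with ⟨i, h | ⟨j, y⟩⟩ <;> rfl

def src : Bridge n c → Vtx n c
  | .inl (i, j) => (i, .inl (.inr j))
  | .inr t => (t.castSucc, .inl (.inl 1))

def tgt : Bridge n c → Vtx n c
  | .inl (i, j) => (i, .inr (j, 0))
  | .inr t => (t.succ, .inl (.inl 0))

variable (n c) in
def graph : SimpleGraph (Vtx n c) := cliqueBridge blk src tgt

lemma blk_src_ne_blk_tgt (z : Bridge n c) : blk (src z) ≠ blk (tgt z) := by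
  rcases z with ⟨i, j⟩ | t
  · simp [src, tgt]
  · simp [src, tgt, Fin.ext_iff]

lemma injective_sum_elim_src_tgt : Function.Injective (Sum.elim (src (n := n) (c := c)) tgt) := by
  rintro ((⟨i, j⟩ | t) | (⟨i, j⟩ | t)) ((⟨i', j'⟩ | t') | (⟨i', j'⟩ | t')) h <;>
    simp_all [src, tgt, Fin.ext_iff]

lemma graph_adj_of_blk_eq {p q : Vtx n c} (hpq : p ≠ q) (h : blk p = blk q) :
    (graph n c).Adj p q :=
  cliqueBridge_adj_of_blk_eq hpq h

lemma graph_adj_src_tgt (z : Bridge n c) : (graph n c).Adj (src z) (tgt z) :=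
  cliqueBridge_adj_src_tgt blk_src_ne_blk_tgt z

lemma card_fiber_hub (i : Fin (n + 1)) (h : Fin 2 ⊕ Fin c) :
    #({q | blk q = blk (i, .inl h)} : Finset (Vtx n c)) = c + 2 := by
  rw [blk_inl, card_filter]
  simp [Fintype.sum_prod_type, blk, add_comm]

lemma card_fiber_leaf (i : Fin (n + 1)) (j : Fin c) (y : Fin (c + 1)) :
    #({q | blk q = blk (i, .inr (j, y))} : Finset (Vtx n c)) = c + 1 := by
  rw [blk_inr, card_filter]
  simp [Fintype.sum_prod_type, blk, ite_and]
  rw [card_filter, Fintype.sum_prod_type]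
  simp [apply_ite (fun s : Finset (Fin (c + 1)) => #s)]

lemma two_mul_card_edgeSet :
    2 * Nat.card (graph n c).edgeSet =
      (n + 1) * ((c + 2) * (c + 1) + c * (c + 1) * c + 2 * c) + 2 * n := by
  rw [Nat.card_eq_fintype_card, ← edgeFinset_card, graph,
    cliqueBridge_two_mul_card_edgeFinset blk_src_ne_blk_tgt injective_sum_elim_src_tgt]
  simp only [Fintype.sum_prod_type, Fintype.sum_sum_type, card_fiber_hub, card_fiber_leaf]
  simp
  ring

lemma card_neighborSet_le (p : Vtx n c) : Nat.card ((graph n c).neighborSet p) ≤ c + 2 := by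
  rw [Nat.card_eq_fintype_card, card_neighborSet_eq_degree]
  refine (cliqueBridge_degree_le blk_src_ne_blk_tgt injective_sum_elim_src_tgt p).trans ?_
  rcases p with ⟨i, h | ⟨j, y⟩⟩
  · rw [card_fiber_hub]
  · rw [card_fiber_leaf]; omega

lemma card_vtx : Nat.card (Vtx n c) = (n + 1) * ((c + 2) + (c + 1) * c) := by
  simp [Nat.card_eq_fintype_card]
  ring

lemma isOnlyEdgeLeaving_leafClique (i : Fin (n + 1)) (j : Fin c) :
    (graph n c).IsOnlyEdgeLeaving {p | blk p = (i, some j)} (i, .inr (j, 0)) (i, .inl (.inr j)) := by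
  refine cliqueBridge_isOnlyEdgeLeaving blk_src_ne_blk_tgt ?_
    (graph_adj_src_tgt (.inl (i, j))).symm (by simp) (by simp) ?_
  · exact fun _ _ hpq hp => hpq.symm.trans hp
  rintro (⟨i', j'⟩ | t)
  · by_cases h : i' = i ∧ j' = j
    · obtain ⟨rfl, rfl⟩ := h
      exact Or.inr Sym2.eq_swap
    · left
      simp [src, tgt]
      tauto
  · simp [src, tgt]

lemma isOnlyEdgeLeaving_unitsLE (t : Fin n) :
    (graph n c).IsOnlyEdgeLeaving {p | p.1 ≤ t.castSucc}
      (t.castSucc, .inl (.inl 1)) (t.succ, .inl (.inl 0)) := by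
  refine cliqueBridge_isOnlyEdgeLeaving blk_src_ne_blk_tgt ?_
    (graph_adj_src_tgt (.inr t)) (by simp) (by simp [Fin.le_iff_val_le_val]) ?_
  · exact fun p q hpq hp => by rwa [Set.mem_ofPred_eq, ← fst_blk, ← hpq, fst_blk]
  rintro (⟨i', j'⟩ | t')
  · simp [src, tgt]
  · rcases eq_or_ne t' t with rfl | h
    · exact Or.inr rfl
    · left
      have := Fin.val_ne_of_ne h
      simp only [src, tgt, Set.mem_ofPred_eq, Fin.le_iff_val_le_val, Fin.val_castSucc,
        Fin.val_succ]
      omega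

lemma separated_of_leaf {i : Fin (n + 1)} {j : Fin c} {y : Fin (c + 1)} {w : Vtx n c}
    (hw : blk w ≠ (i, some j)) (hadj : ¬ (graph n c).Adj (i, .inr (j, y)) w) :
    (graph n c).Separated (i, .inr (j, y)) w :=
  (isOnlyEdgeLeaving_leafClique i j).separated rfl hw hadj

lemma separated_of_lt {u w : Vtx n c} (hlt : u.1 < w.1) (hadj : ¬ (graph n c).Adj u w) :
    (graph n c).Separated u w :=
  (isOnlyEdgeLeaving_unitsLE ⟨u.1, by omega⟩).separated (le_refl u.1) (not_le.2 hlt) hadj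

lemma separated_of_not_adj {u w : Vtx n c} (huw : u ≠ w) (hadj : ¬ (graph n c).Adj u w) :
    (graph n c).Separated u w := by
  have hblk : blk u ≠ blk w := fun h => hadj (graph_adj_of_blk_eq huw h)
  rcases u with ⟨i, h | ⟨j, y⟩⟩
  · rcases w with ⟨i', h' | ⟨j', y'⟩⟩
    · have hii' : i ≠ i' := fun hii' => hblk (by simp [hii'])
      rcases lt_or_gt_of_ne hii' with hlt | hlt
      · exact separated_of_lt hlt hadj
      · exact (separated_of_lt hlt fun h => hadj h.symm).symm
    · exact (separated_of_leaf hblk fun h => hadj h.symm).symm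
  · exact separated_of_leaf (Ne.symm hblk) hadj

variable (n c) in
def terminals : Set (Vtx n c) := {(0, .inl (.inl 0)), (Fin.last n, .inl (.inl 1))}

lemma reachable_induce_of_blk_eq {S : Set (Vtx n c)} {p q : Vtx n c} (hp : p ∈ S) (hq : q ∈ S)
    (h : blk p = blk q) : ((graph n c).induce S).Reachable ⟨p, hp⟩ ⟨q, hq⟩ := by
  by_cases hpq : p = q
  · subst hpq; rfl
  · exact Adj.reachable (graph_adj_of_blk_eq hpq h)

lemma reachable_induce_src_tgt {S : Set (Vtx n c)} (z : Bridge n c) (hsrc : src z ∈ S)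
    (htgt : tgt z ∈ S) : ((graph n c).induce S).Reachable ⟨src z, hsrc⟩ ⟨tgt z, htgt⟩ :=
  Adj.reachable (graph_adj_src_tgt z)

lemma preconnected_induce_of_subset (hc : 0 < c) {S : Set (Vtx n c)}
    (hS : (terminals n c)ᶜ ⊆ S) : ((graph n c).induce S).Preconnected := by
  let anchor (i : Fin (n + 1)) : Vtx n c := (i, .inl (.inr ⟨0, hc⟩))
  have hanchor (i) : anchor i ∈ S := hS (by simp [terminals, anchor])
  have to_anchor (p : Vtx n c) (hp : p ∈ S) :
      ((graph n c).induce S).Reachable ⟨p, hp⟩ ⟨anchor p.1, hanchor p.1⟩ := by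
    rcases p with ⟨i, h | ⟨j, y⟩⟩
    · exact reachable_induce_of_blk_eq hp _ rfl
    · have hleaf : ((i, .inr (j, 0)) : Vtx n c) ∈ S := hS (by simp [terminals])
      have hhub : ((i, .inl (.inr j)) : Vtx n c) ∈ S := hS (by simp [terminals])
      exact (reachable_induce_of_blk_eq hp hleaf rfl).trans <|
        (reachable_induce_src_tgt (.inl (i, j)) hhub hleaf).symm.trans
          (reachable_induce_of_blk_eq hhub (hanchor i) rfl)
  have to_first (i : Fin (n + 1)) :
      ((graph n c).induce S).Reachable ⟨anchor i, hanchor i⟩ ⟨anchor 0, hanchor 0⟩ := by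
    induction i using Fin.induction with
    | zero => rfl
    | succ t ih =>
      have hentry : ((t.succ, .inl (.inl 0)) : Vtx n c) ∈ S := hS (by simp [terminals])
      have hexit : ((t.castSucc, .inl (.inl 1)) : Vtx n c) ∈ S :=
        hS (by simp [terminals, Fin.castSucc_ne_last])
      exact (reachable_induce_of_blk_eq (hanchor _) hentry rfl).trans <|
        (reachable_induce_src_tgt (.inr t) hexit hentry).symm.trans <|
          (reachable_induce_of_blk_eq hexit (hanchor _) rfl).trans ih
  intro p q
  exact ((to_anchor p p.2).trans (to_first _)).trans ((to_anchor q q.2).trans (to_first _)).symm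

lemma connected (hc : 0 < c) : (graph n c).Connected :=
  ⟨(induceUnivIso _).preconnected_iff.1 (preconnected_induce_of_subset hc (Set.subset_univ _))⟩

lemma not_isCompleteK (hc : 0 < c) : ¬ ATPaper.IsCompleteK (graph n c) (c + 3) := by
  rintro ⟨e⟩
  have := Nat.card_congr e.toEquiv
  rw [card_vtx, Nat.card_eq_fintype_card, Fintype.card_fin] at this
  have hleaves : 2 ≤ (c + 1) * c := by nlinarith
  have hunits : (c + 2) + (c + 1) * c ≤ (n + 1) * ((c + 2) + (c + 1) * c) :=
    Nat.le_mul_of_pos_left _ (by omega)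
  omega

lemma memTk (hc : 0 < c) : ATPaper.MemTk (graph n c) (c + 3) :=
  ⟨isGallaiTree_of_separated (connected hc) fun _ _ => separated_of_not_adj,
    card_neighborSet_le, not_isCompleteK hc⟩

def hub (i : Fin (n + 1)) : Finset (Vtx n c) := univ.image fun h => (i, .inl h)

lemma isNClique_hub (i : Fin (n + 1)) : (graph n c).IsNClique (c + 2) (hub i) := by
  refine ⟨?_, ?_⟩
  · simp only [hub, coe_image, coe_univ, Set.image_univ]
    rintro _ ⟨h, rfl⟩ _ ⟨h', rfl⟩ hne
    exact graph_adj_of_blk_eq hne rfl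
  · rw [hub, card_image_of_injective _ fun h h' hh => by simpa using hh]
    simp [add_comm]

lemma leaf_not_mem_of_isNClique (hc : 0 < c) {K : Finset (Vtx n c)}
    (hK : (graph n c).IsNClique (c + 2) K) (i : Fin (n + 1)) (j : Fin c) (y : Fin (c + 1)) :
    ((i, .inr (j, y)) : Vtx n c) ∉ K := by
  intro hp
  by_cases hsub : ∀ q ∈ K, blk q = (i, some j)
  · have := card_le_card (t := {q | blk q = blk ((i, .inr (j, y)) : Vtx n c)})
      fun q hq => mem_filter.2 ⟨mem_univ q, hsub q hq⟩
    rw [hK.card_eq, card_fiber_leaf i j y] at this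
    omega
  · push Not at hsub
    obtain ⟨q, hq, hqS⟩ := hsub
    have hpair :=
      (isOnlyEdgeLeaving_leafClique i j).subset_pair_of_isClique hK.isClique hp rfl hq hqS
    have := card_le_card (s := K) (t := {(i, .inr (j, 0)), (i, .inl (.inr j))})
      fun r hr => by simpa using hpair hr
    rw [hK.card_eq] at this
    have := this.trans card_le_two
    omega

lemma not_preconnected_of_hub_not_mem_terminals {i : Fin (n + 1)} {h : Fin 2 ⊕ Fin c}
    (hv : ((i, .inl h) : Vtx n c) ∉ terminals n c) :
    ¬ ((graph n c).induce {(i, .inl h)}ᶜ).Preconnected := by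
  rcases h with h | j
  · fin_cases h
    · obtain ⟨t, rfl⟩ : ∃ t, Fin.succ t = i :=
        Fin.exists_succ_eq.2 (by simpa [terminals] using hv)
      exact (isOnlyEdgeLeaving_unitsLE t).separatedBy_right.not_preconnected
        (u := (t.castSucc, .inl (.inl 1))) (w := (t.succ, .inl (.inl 1))) (by simp) (by simp)
        (by simp) (by simp [Fin.le_iff_val_le_val])
    · obtain ⟨t, rfl⟩ : ∃ t, Fin.castSucc t = i :=
        Fin.exists_castSucc_eq.2 (by simpa [terminals] using hv)
      exact (isOnlyEdgeLeaving_unitsLE t).separatedBy_left.not_preconnected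
        (u := (t.castSucc, .inl (.inl 0))) (w := (t.succ, .inl (.inl 0))) (by simp) (by simp)
        (by simp) (by simp [Fin.le_iff_val_le_val])
  · exact (isOnlyEdgeLeaving_leafClique i j).separatedBy_right.not_preconnected
      (u := (i, .inr (j, 0))) (w := (i, .inl (.inl 0))) (by simp) (by simp) (by simp) (by simp)

lemma noncut_Wk_eq_terminals (hc : 0 < c) :
    {v | v ∈ ATPaper.Wk (graph n c) (c + 3) ∧ ((graph n c).induce {v}ᶜ).Preconnected} =
      terminals n c := by
  ext v
  constructor
  · rintro ⟨⟨K, hK, hvK⟩, hpre⟩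
    rcases v with ⟨i, h | ⟨j, y⟩⟩
    · by_contra hv
      exact not_preconnected_of_hub_not_mem_terminals hv hpre
    · exact absurd hvK (leaf_not_mem_of_isNClique hc hK i j y)
  · intro hv
    refine ⟨?_, preconnected_induce_of_subset hc fun p hp => ?_⟩
    · rcases hv with rfl | rfl
      · exact ⟨hub 0, isNClique_hub 0, mem_image_of_mem _ (mem_univ _)⟩
      · exact ⟨hub (Fin.last n), isNClique_hub _, mem_image_of_mem _ (mem_univ _)⟩
    · rintro rfl; exact hp hv

lemma qT_eq (hc : 0 < c) : ATPaper.qT (graph n c) (c + 3) = 2 := by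
  rw [ATPaper.qT, noncut_Wk_eq_terminals hc, Nat.card_coe_set_eq, terminals]
  exact Set.ncard_pair (by simp)

end GallaiChain

/-- the extremal construction. -/
theorem stmt_9 (k m : ℕ) (hk : 5 ≤ k) (hm : 1 ≤ m) :
    ∃ (W : Type) (_ : Fintype W) (T : SimpleGraph W), ATPaper.MemTk T k ∧
      ATPaper.HasClique T (k - 1) ∧ ATPaper.qT T k = 2 ∧
      Nat.card W = m * ((k - 1) + (k - 2) * (k - 3)) ∧
      2 * Nat.card T.edgeSet =
        m * ((k - 1) * (k - 2) + (k - 3) * (k - 2) * (k - 3) + 2 * (k - 3)) + 2 * (m - 1) := by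
  obtain ⟨c, rfl⟩ : ∃ c, k = c + 3 := ⟨k - 3, by omega⟩
  obtain ⟨n, rfl⟩ : ∃ n, m = n + 1 := ⟨m - 1, by omega⟩
  have hc : 0 < c := by omega
  refine ⟨GallaiChain.Vtx n c, inferInstance, GallaiChain.graph n c, GallaiChain.memTk hc,
    ⟨_, GallaiChain.isNClique_hub 0⟩, GallaiChain.qT_eq hc, GallaiChain.card_vtx, ?_⟩
  simpa using GallaiChain.two_mul_card_edgeSet
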